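/- In additive 3-out-of-3 secret sharing over Z_L where s₁, s₂ are uniform and independent and s₃ = x - s₁ - s₂, any two of the three shares are jointly uniformly distributed on Z_L × Z_L, independently of the secret x. -/

import Mathlib

/-! Each of the three maps sending the two random shares `(s₁, s₂)` to a pair of shares is a
bijection of `G × G` (with `s₃ = x - s₁ - s₂`, either missing share is recovered from the other
two and `x`), and a bijection pushes the uniform distribution forward to the uniform one. -/

theorem PMF.map_uniformOfFintype_equiv {α β : Type*} [Fintype α] [Nonempty α] [Fintype β]
    [Nonempty β] (e : α ≃ β) : (uniformOfFintype α).map e = uniformOfFintype β := by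
  ext b
  rw [map_apply, tsum_eq_single (e.symm b) fun a ha => if_neg fun hb => ha (by simp [hb]),
    if_pos (e.apply_symm_apply b).symm, uniformOfFintype_apply, uniformOfFintype_apply,
    Fintype.card_congr e]

section AdditiveSharing

variable {G : Type*} [AddCommGroup G]

def shareEquivFirstThird (x : G) : Equiv.Perm (G × G) :=
  Function.Involutive.toPerm (fun p => (p.1, x - p.1 - p.2)) fun p => by
    ext <;> simp

def shareEquivSecondThird (x : G) : Equiv.Perm (G × G) where
  toFun p := (p.2, x - p.1 - p.2)
  invFun q := (x - q.1 - q.2, q.1)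
  left_inv p := by ext <;> simp
  right_inv q := by ext <;> simp; abel

end AdditiveSharing

theorem two_shares_uniform (L : ℕ) [NeZero L] (x : ZMod L) :
    ((PMF.uniformOfFintype (ZMod L × ZMod L)).map
        (fun p => (p.1, p.2)) = PMF.uniformOfFintype (ZMod L × ZMod L)) ∧
    ((PMF.uniformOfFintype (ZMod L × ZMod L)).map
        (fun p => (p.1, x - p.1 - p.2)) = PMF.uniformOfFintype (ZMod L × ZMod L)) ∧
    ((PMF.uniformOfFintype (ZMod L × ZMod L)).map
        (fun p => (p.2, x - p.1 - p.2)) = PMF.uniformOfFintype (ZMod L × ZMod L)) :=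
  ⟨PMF.map_id _, PMF.map_uniformOfFintype_equiv (shareEquivFirstThird x),
    PMF.map_uniformOfFintype_equiv (shareEquivSecondThird x)⟩
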